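/- Let n be a natural number and let ℓ > 1 be an odd natural number. The set of conjugacy class sums Y_ℓ(n) = {s_i : 1 ≤ i ≤ n, and if i is even then ℓ does not divide i} ∪ {s_{(2ℓj−1,2)} : j ≥ 1, 1 < 2ℓj < n} generates the center Z(ℚ[S_n]) of the group algebra ℚ[S_n] as a ℚ-algebra. -/

import Mathlib

/-- `classSum n m` is the sum, in the group algebra `ℚ[Sₙ]`, of all permutations
whose cycle type is the multiset `m` (parts of size 1 being suppressed, as in
Mathlib's `Equiv.Perm.cycleType`). -/
noncomputable def classSum (n : ℕ) (m : Multiset ℕ) : MonoidAlgebra ℚ (Equiv.Perm (Fin n)) :=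
  ∑ σ ∈ Finset.univ.filter (fun σ : Equiv.Perm (Fin n) => σ.cycleType = m),
    MonoidAlgebra.single σ (1 : ℚ)

/-- The cycle sum `sᵢ`: the sum of all `i`-cycles in `Sₙ` for `i ≥ 2`, and the
identity of `ℚ[Sₙ]` for `i ≤ 1`. -/
noncomputable def cycleSum (n i : ℕ) : MonoidAlgebra ℚ (Equiv.Perm (Fin n)) :=
  if i < 2 then 1 else classSum n {i}

/-!
Since the class sums span the centre, it suffices to reach every class sum `s_μ` from `Y`.
Order cycle types by the reflection length `d(μ) = |μ| - #μ` (the rank of `1 - σ` on `ℚⁿ`, hence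
subadditive), then by the number of cycles. A product `ab` with `d(ab) = d(a) + d(b)` has fewer
cycles than `a` and `b` together unless `a` and `b` are disjoint, so `s_μ s_ν` is a nonzero
multiple of `s_{μ ∪ ν}` plus class sums that come earlier in the order: cycles can be split off one
at a time. A cycle sum `s_k` outside `Y` has `k = 2ℓj`, and `s₂ s_{k-1}` is a nonzero multiple of
`s_k` plus `s_{(k-1,2)} ∈ Y` plus earlier terms, where `s₂, s_{k-1} ∈ Y` as `ℓ > 1` is odd.
-/

open Finset Equiv

open scoped MonoidAlgebra

namespace Equiv.Perm

open Module Submodule LinearMap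

variable {α : Type*}

noncomputable def oneSubFunLeft (σ : Perm α) : (α → ℚ) →ₗ[ℚ] (α → ℚ) :=
  LinearMap.id - funLeft ℚ ℚ σ

/-- The least number of transpositions with product `σ`, realised as the rank of `1 - σ`. -/
noncomputable def reflectionLength [Fintype α] (σ : Perm α) : ℕ :=
  finrank ℚ (range (oneSubFunLeft σ))

theorem mem_ker_oneSubFunLeft {σ : Perm α} {v : α → ℚ} :
    v ∈ ker (oneSubFunLeft σ) ↔ ∀ x, v (σ x) = v x := by
  simp [oneSubFunLeft, funLeft, funext_iff, sub_eq_zero, eq_comm]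

theorem reflectionLength_add_finrank_ker [Fintype α] (σ : Perm α) :
    reflectionLength σ + finrank ℚ (ker (oneSubFunLeft σ)) = Fintype.card α := by
  rw [reflectionLength, finrank_range_add_finrank_ker, finrank_pi]

theorem reflectionLength_mul_le [Fintype α] (a b : Perm α) :
    reflectionLength (a * b) ≤ reflectionLength a + reflectionLength b := by
  have hsplit : oneSubFunLeft (a * b) =
      (oneSubFunLeft b).comp (funLeft ℚ ℚ a) + oneSubFunLeft a := by
    ext v x
    simp [oneSubFunLeft, funLeft]
  have hrange : range ((oneSubFunLeft b).comp (funLeft ℚ ℚ a)) = range (oneSubFunLeft b) :=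
    range_comp_of_range_eq_top _ (range_eq_top.mpr (LinearEquiv.funCongrLeft ℚ ℚ a).surjective)
  calc reflectionLength (a * b)
      ≤ finrank ℚ ↥(range (oneSubFunLeft b) ⊔ range (oneSubFunLeft a)) := by
        rw [reflectionLength, hsplit, ← hrange]
        exact finrank_mono (range_add_le _ _)
    _ ≤ reflectionLength a + reflectionLength b :=
        (finrank_add_le_finrank_add_finrank _ _).trans_eq (add_comm _ _)

theorem ker_oneSubFunLeft_mul_of_disjoint {σ τ : Perm α} (h : σ.Disjoint τ) :
    ker (oneSubFunLeft (σ * τ)) = ker (oneSubFunLeft σ) ⊓ ker (oneSubFunLeft τ) := by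
  ext v
  simp only [Submodule.mem_inf, mem_ker_oneSubFunLeft, mul_apply]
  refine ⟨fun hv => ⟨fun x => ?_, fun x => ?_⟩, fun hv x => by rw [hv.1, hv.2]⟩
  · rcases h x with hσ | hτ
    · rw [hσ]
    · rw [← hv x, hτ]
  · rcases h (τ x) with hσ | hτ
    · rw [← hv x, hσ]
    · rw [τ.injective hτ]

theorem ker_oneSubFunLeft_sup_of_disjoint [DecidableEq α] [Fintype α] {σ τ : Perm α}
    (h : σ.Disjoint τ) : ker (oneSubFunLeft σ) ⊔ ker (oneSubFunLeft τ) = ⊤ := by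
  refine eq_top_iff.mpr fun v _ => ?_
  set w : α → ℚ := fun x => if x ∈ σ.support then v x else 0
  have hw : w ∈ ker (oneSubFunLeft τ) := by
    refine mem_ker_oneSubFunLeft.mpr fun x => ?_
    rcases h x with hσ | hτ
    · have hτσ : σ (τ x) = τ x := by
        rcases h (τ x) with h' | h'
        · exact h'
        · rw [τ.injective h', hσ]
      simp [w, hσ, hτσ]
    · rw [hτ]
  have hvw : v - w ∈ ker (oneSubFunLeft σ) := by
    refine mem_ker_oneSubFunLeft.mpr fun x => ?_
    by_cases hx : x ∈ σ.support
    · simp [w, mem_support.mp hx]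
    · rw [notMem_support.mp hx]
  simpa using add_mem_sup hvw hw

theorem reflectionLength_mul_of_disjoint [DecidableEq α] [Fintype α] {σ τ : Perm α}
    (h : σ.Disjoint τ) :
    reflectionLength (σ * τ) = reflectionLength σ + reflectionLength τ := by
  have := finrank_sup_add_finrank_inf_eq (ker (oneSubFunLeft σ)) (ker (oneSubFunLeft τ))
  rw [ker_oneSubFunLeft_sup_of_disjoint h, ← ker_oneSubFunLeft_mul_of_disjoint h, finrank_top,
    finrank_pi] at this
  have := reflectionLength_add_finrank_ker (σ * τ)
  have := reflectionLength_add_finrank_ker σ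
  have := reflectionLength_add_finrank_ker τ
  omega

theorem IsCycle.finrank_ker_oneSubFunLeft [DecidableEq α] [Fintype α] {c : Perm α}
    (hc : c.IsCycle) :
    finrank ℚ (ker (oneSubFunLeft c)) + #c.support = Fintype.card α + 1 := by
  obtain ⟨x₀, hx₀, -⟩ := id hc
  have hconst : ∀ v ∈ ker (oneSubFunLeft c), ∀ y ∈ c.support, v y = v x₀ := by
    intro v hv y hy
    obtain ⟨i, rfl⟩ := hc.exists_pow_eq hx₀ (mem_support.mp hy)
    have hinv : v ∘ c = v := funext (mem_ker_oneSubFunLeft.mp hv)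
    rw [coe_pow, ← Function.comp_apply (f := v), Function.iterate_invariant hinv]
  let e : ker (oneSubFunLeft c) ≃ₗ[ℚ] ℚ × ({x // x ∉ c.support} → ℚ) :=
    { toFun v := (v.1 x₀, fun y => v.1 y)
      map_add' _ _ := rfl
      map_smul' _ _ := rfl
      invFun p := ⟨fun y => if hy : y ∈ c.support then p.1 else p.2 ⟨y, hy⟩,
        mem_ker_oneSubFunLeft.mpr fun y => by
          by_cases hy : y ∈ c.support
          · simp [hy, apply_mem_support.mpr hy]
          · rw [notMem_support.mp hy]⟩
      left_inv v := by
        ext y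
        by_cases hy : y ∈ c.support
        · simp [hy, hconst v v.2 y hy]
        · simp [hy]
      right_inv p :=
        Prod.ext (by simp [mem_support.mpr hx₀]) (funext fun y => by simp [y.2]) }
  rw [e.finrank_eq, finrank_prod, finrank_self, finrank_pi, Fintype.card_subtype_compl,
    Fintype.card_coe]
  have := c.support.card_le_univ
  have := hc.two_le_card_support
  omega

theorem IsCycle.reflectionLength_add_one [DecidableEq α] [Fintype α] {c : Perm α}
    (hc : c.IsCycle) : reflectionLength c + 1 = #c.support := by
  have := reflectionLength_add_finrank_ker c
  have := hc.finrank_ker_oneSubFunLeft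
  omega

theorem reflectionLength_add_card_cycleType [DecidableEq α] [Fintype α] (σ : Perm α) :
    reflectionLength σ + Multiset.card σ.cycleType = σ.cycleType.sum := by
  induction σ using cycle_induction_on with
  | base_one =>
    have : oneSubFunLeft (1 : Perm α) = 0 := by
      ext v x
      simp [oneSubFunLeft, funLeft]
    simp [reflectionLength, this]
  | base_cycles c hc => simpa [hc.cycleType] using hc.reflectionLength_add_one
  | induction_disjoint σ τ hd _ ihσ ihτ =>
    rw [reflectionLength_mul_of_disjoint hd, hd.cycleType_mul, Multiset.card_add,
      Multiset.sum_add]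
    omega

end Equiv.Perm

/-- The induction order on cycle types: reflection length first, then number of cycles. -/
def classKey (m : Multiset ℕ) : ℕ ×ₗ ℕ :=
  toLex (m.sum - Multiset.card m, Multiset.card m)

theorem classKey_lt_add {m₁ m₂ : Multiset ℕ} (h₂ : Multiset.card m₂ ≤ m₂.sum) (hne : m₂ ≠ 0) :
    classKey m₁ < classKey (m₁ + m₂) := by
  have := Multiset.card_pos.mpr hne
  simp only [classKey, Multiset.card_add, Multiset.sum_add, Prod.Lex.toLex_lt_toLex]
  omega

namespace Equiv.Perm

variable {α : Type*} [DecidableEq α] [Fintype α]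

theorem card_cycleType_le_sum (σ : Perm α) : Multiset.card σ.cycleType ≤ σ.cycleType.sum :=
  Nat.le.intro ((add_comm _ _).trans (reflectionLength_add_card_cycleType σ))

theorem cycleType_mul_eq_add_or_classKey_lt (a b : Perm α) :
    (a * b).cycleType = a.cycleType + b.cycleType ∨
      classKey (a * b).cycleType < classKey (a.cycleType + b.cycleType) := by
  by_cases hd : a.Disjoint b
  · exact Or.inl hd.cycleType_mul
  right
  -- a common point of the supports makes `a * b` lose a cycle when the lengths add up
  obtain ⟨x, hxa, hxb⟩ : ∃ x, a x ≠ x ∧ b x ≠ x := by simpa [Disjoint] using hd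
  have hinter : 0 < #(a.support ∩ b.support) :=
    card_pos.mpr ⟨x, mem_inter.mpr ⟨mem_support.mpr hxa, mem_support.mpr hxb⟩⟩
  have hunion := card_union_add_card_inter a.support b.support
  have hsupp := card_le_card (support_mul_le a b)
  have hle := reflectionLength_mul_le a b
  have hab := reflectionLength_add_card_cycleType (a * b)
  have ha := reflectionLength_add_card_cycleType a
  have hb := reflectionLength_add_card_cycleType b
  rw [sum_cycleType] at hab ha hb
  rw [sup_eq_union] at hsupp
  simp only [classKey, Multiset.card_add, Multiset.sum_add, sum_cycleType, Prod.Lex.toLex_lt_toLex]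
  omega

theorem exists_disjoint_mul_eq_of_two_le_card_cycleType {π : Perm α}
    (h : 2 ≤ Multiset.card π.cycleType) :
    ∃ a b : Perm α, a.Disjoint b ∧ a ≠ 1 ∧ b ≠ 1 ∧ a * b = π := by
  obtain ⟨k, hk⟩ := Multiset.card_pos_iff_exists_mem.mp (by omega : 0 < Multiset.card π.cycleType)
  obtain ⟨c, τ, rfl, hd, hc, -⟩ := mem_cycleType_iff.mp hk
  refine ⟨c, τ, hd, hc.ne_one, ?_, rfl⟩
  rintro rfl
  rw [mul_one, card_cycleType_eq_one.mpr hc] at h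
  omega

theorem exists_swap_mul_eq_of_cycleType_eq_singleton {π : Perm α} {k : ℕ}
    (h : π.cycleType = {k}) (hk : 3 ≤ k) :
    ∃ a b : Perm α, a.cycleType = {2} ∧ b.cycleType = {k - 1} ∧ a * b = π := by
  have hπ : π.IsCycle := card_cycleType_eq_one.mp (by simp [h])
  have hsupp : #π.support = k := by simpa [h] using (sum_cycleType π).symm
  obtain ⟨x, hx⟩ := card_pos.mp (show 0 < #π.support by omega)
  have hπx : π x ≠ x := mem_support.mp hx
  have hπ2x : π (π x) ≠ x := fun h2 => by
    have := card_support_swap hπx.symm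
    rw [← hπ.eq_swap_of_apply_apply_eq_self hπx h2] at this
    omega
  refine ⟨swap x (π x), swap x (π x) * π, ?_, ?_, swap_mul_self_mul x (π x) π⟩
  · rw [(isCycle_swap hπx.symm).cycleType, card_support_swap hπx.symm]
  · rw [(hπ.swap_mul hπx hπ2x).cycleType, support_swap_mul_eq π x hπ2x,
      card_sdiff_of_subset (singleton_subset_iff.mpr hx), card_singleton, hsupp]

end Equiv.Perm

namespace MonoidAlgebra

theorem mem_center_iff_coeff_conj {R G : Type*} [CommSemiring R] [Group G] {x : R[G]} :
    x ∈ Subalgebra.center R R[G] ↔ ∀ g h : G, x.coeff (g * h * g⁻¹) = x.coeff h := by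
  rw [Subalgebra.mem_center_iff]
  refine ⟨fun hx g h => ?_, fun hx b => ?_⟩
  · simpa using congrArg (fun y => y.coeff (g * h)) (hx (single g 1)).symm
  · induction b using induction_on with
    | of g =>
      ext h
      simpa [mul_assoc] using hx g⁻¹ (h * g⁻¹)
    | add y z hy hz => rw [add_mul, mul_add, hy, hz]
    | smul r y hy => rw [smul_mul_assoc, mul_smul_comm, hy]

end MonoidAlgebra

section ClassSums

variable {n : ℕ}

theorem coeff_classSum (m : Multiset ℕ) (σ : Perm (Fin n)) :
    (classSum n m).coeff σ = if σ.cycleType = m then 1 else 0 := by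
  classical
  simp [classSum, MonoidAlgebra.coeff_sum, MonoidAlgebra.coeff_single, Finsupp.single_apply]

theorem classSum_zero : classSum n 0 = 1 := by
  classical
  have : ({σ | σ.cycleType = 0} : Finset (Perm (Fin n))) = {1} := by
    ext σ
    simp
  rw [classSum, this, sum_singleton, MonoidAlgebra.one_def]

theorem classSum_eq_zero {m : Multiset ℕ} (h : ¬ ∃ σ : Perm (Fin n), σ.cycleType = m) :
    classSum n m = 0 :=
  sum_eq_zero fun σ hσ => absurd ⟨σ, (mem_filter.mp hσ).2⟩ h

theorem classSum_mem_center (m : Multiset ℕ) :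
    classSum n m ∈ Subalgebra.center ℚ ℚ[Perm (Fin n)] :=
  MonoidAlgebra.mem_center_iff_coeff_conj.mpr fun g σ => by
    simp [coeff_classSum, Perm.cycleType_conj]

theorem eq_sum_classSum_of_mem_center {x : ℚ[Perm (Fin n)]}
    (hx : x ∈ Subalgebra.center ℚ ℚ[Perm (Fin n)]) :
    x = ∑ m ∈ univ.image (Perm.cycleType (α := Fin n)),
      x.coeff (Function.invFun Perm.cycleType m) • classSum n m := by
  ext σ
  rw [MonoidAlgebra.coeff_sum, Finsupp.finsetSum_apply,
    sum_eq_single_of_mem σ.cycleType (mem_image_of_mem _ (mem_univ σ))]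
  · obtain ⟨g, hg⟩ := isConj_iff.mp
      (Perm.isConj_iff_cycleType_eq.mpr (Function.invFun_eq ⟨σ, rfl⟩).symm)
    simp [coeff_classSum, ← hg, MonoidAlgebra.mem_center_iff_coeff_conj.mp hx]
  · intro m _ hm
    simp [coeff_classSum, Ne.symm hm]

theorem coeff_classSum_mul_classSum (m₁ m₂ : Multiset ℕ) (σ : Perm (Fin n)) :
    (classSum n m₁ * classSum n m₂).coeff σ =
      #{p : Perm (Fin n) × Perm (Fin n) |
        p.1.cycleType = m₁ ∧ p.2.cycleType = m₂ ∧ p.1 * p.2 = σ} := by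
  classical
  rw [classSum, classSum, sum_mul_sum, ← sum_product']
  simp only [MonoidAlgebra.single_mul_single, mul_one, MonoidAlgebra.coeff_sum,
    Finsupp.finsetSum_apply, MonoidAlgebra.coeff_single, Finsupp.single_apply, sum_boole]
  congr 2
  ext
  simp [and_assoc]

theorem coeff_classSum_mul_classSum_ne_zero_iff {m₁ m₂ : Multiset ℕ} {σ : Perm (Fin n)} :
    (classSum n m₁ * classSum n m₂).coeff σ ≠ 0 ↔
      ∃ a b : Perm (Fin n), a.cycleType = m₁ ∧ b.cycleType = m₂ ∧ a * b = σ := by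
  simp [coeff_classSum_mul_classSum]

theorem classSum_mul_mem {S : Subalgebra ℚ ℚ[Perm (Fin n)]} {a b : Perm (Fin n)}
    (ha : classSum n a.cycleType ∈ S) (hb : classSum n b.cycleType ∈ S)
    (hother : ∀ a' b' : Perm (Fin n), a'.cycleType = a.cycleType → b'.cycleType = b.cycleType →
      (a' * b').cycleType ≠ (a * b).cycleType → classSum n (a' * b').cycleType ∈ S) :
    classSum n (a * b).cycleType ∈ S := by
  set P := classSum n a.cycleType * classSum n b.cycleType
  set T := univ.image (Perm.cycleType (α := Fin n))
  set rep := Function.invFun (Perm.cycleType (α := Fin n))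
  have hrep : ∀ m ∈ T, (rep m).cycleType = m := fun m hm =>
    Function.invFun_eq (by simpa [T] using hm)
  have hT : (a * b).cycleType ∈ T := mem_image_of_mem _ (mem_univ _)
  have hc : P.coeff (rep (a * b).cycleType) ≠ 0 := by
    obtain ⟨g, hg⟩ := isConj_iff.mp (Perm.isConj_iff_cycleType_eq.mpr (hrep _ hT).symm)
    refine coeff_classSum_mul_classSum_ne_zero_iff.mpr
      ⟨g * a * g⁻¹, g * b * g⁻¹, Perm.cycleType_conj, Perm.cycleType_conj, ?_⟩
    rw [← hg]
    group
  have hrest : ∑ m ∈ T.erase (a * b).cycleType, P.coeff (rep m) • classSum n m ∈ S := by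
    refine sum_mem fun m hm => ?_
    obtain ⟨hne, hmT⟩ := mem_erase.mp hm
    by_cases h0 : P.coeff (rep m) = 0
    · simp [h0]
    obtain ⟨a', b', ha', hb', hab'⟩ := coeff_classSum_mul_classSum_ne_zero_iff.mp h0
    have hm' : (a' * b').cycleType = m := hab' ▸ hrep m hmT
    subst hm'
    exact S.smul_mem (hother a' b' ha' hb' hne) _
  have hsplit : P.coeff (rep (a * b).cycleType) • classSum n (a * b).cycleType =
      P - ∑ m ∈ T.erase (a * b).cycleType, P.coeff (rep m) • classSum n m := by
    refine eq_sub_of_add_eq ?_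
    rw [add_sum_erase T (fun m => P.coeff (rep m) • classSum n m) hT]
    exact (eq_sum_classSum_of_mem_center
      (mul_mem (classSum_mem_center _) (classSum_mem_center _))).symm
  have hmem := S.smul_mem (hsplit ▸ sub_mem (mul_mem ha hb) hrest)
    (P.coeff (rep (a * b).cycleType))⁻¹
  rwa [inv_smul_smul₀ hc] at hmem

variable {S : Subalgebra ℚ ℚ[Perm (Fin n)]}

theorem classSum_mul_mem_of_disjoint {a b : Perm (Fin n)} (hab : a.Disjoint b) (ha : a ≠ 1)
    (hb : b ≠ 1) (ih : ∀ m, classKey m < classKey (a * b).cycleType → classSum n m ∈ S) :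
    classSum n (a * b).cycleType ∈ S := by
  rw [hab.cycleType_mul] at ih ⊢
  have hka : classKey a.cycleType < classKey (a.cycleType + b.cycleType) :=
    classKey_lt_add b.card_cycleType_le_sum (by simpa using hb)
  have hkb : classKey b.cycleType < classKey (a.cycleType + b.cycleType) :=
    add_comm b.cycleType _ ▸ classKey_lt_add a.card_cycleType_le_sum (by simpa using ha)
  refine hab.cycleType_mul ▸ classSum_mul_mem (ih _ hka) (ih _ hkb)
    fun a' b' ha' hb' hne => ih _ ?_
  rw [← ha', ← hb']
  exact (Perm.cycleType_mul_eq_add_or_classKey_lt a' b').resolve_left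
    (by rwa [ha', hb', ← hab.cycleType_mul])

theorem classSum_singleton_mem {k : ℕ} (hk : 3 ≤ k) (h2 : classSum n {2} ∈ S)
    (hk1 : classSum n {k - 1} ∈ S) (hpair : k < n → classSum n {k - 1, 2} ∈ S)
    (ih : ∀ m, classKey m < classKey {k} → classSum n m ∈ S) :
    classSum n {k} ∈ S := by
  by_cases hex : ∃ π : Perm (Fin n), π.cycleType = {k}
  swap
  · rw [classSum_eq_zero hex]
    exact zero_mem S
  obtain ⟨π, hπ⟩ := hex
  obtain ⟨a, b, ha, hb, rfl⟩ := Perm.exists_swap_mul_eq_of_cycleType_eq_singleton hπ hk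
  rw [← hπ]
  refine classSum_mul_mem (ha ▸ h2) (hb ▸ hk1) fun a' b' ha' hb' hne => ?_
  rw [hπ] at hne
  have hsum := Perm.sum_cycleType_le (a' * b')
  have hle := (a' * b').card_cycleType_le_sum
  have hkey := Perm.cycleType_mul_eq_add_or_classKey_lt a' b'
  rw [ha', hb', ha, hb, add_comm, Multiset.singleton_add] at hkey
  generalize (a' * b').cycleType = m' at *
  rcases hkey with rfl | hlt
  · rw [Multiset.sum_cons, Multiset.sum_singleton, Fintype.card_fin] at hsum
    exact hpair (by omega)
  refine ih m' ?_
  obtain hc | hc | hc : Multiset.card m' = 0 ∨ Multiset.card m' = 1 ∨ 2 ≤ Multiset.card m' := by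
    omega
  · simp [Multiset.card_eq_zero.mp hc, classKey, Prod.Lex.toLex_lt_toLex]
    omega
  · obtain ⟨t, rfl⟩ := Multiset.card_eq_one.mp hc
    simp only [classKey, Multiset.sum_singleton, Multiset.card_singleton, Multiset.sum_cons,
      Multiset.card_cons, Prod.Lex.toLex_lt_toLex, ne_eq,
      Multiset.singleton_inj] at hlt hne hle ⊢
    omega
  · simp only [classKey, Multiset.sum_singleton, Multiset.card_singleton, Multiset.sum_cons,
      Multiset.card_cons, Prod.Lex.toLex_lt_toLex] at hlt ⊢
    omega

end ClassSums

section Generators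

/-- The paper's generating set `Y_ℓ(n)`. -/
def generatorsY (n ℓ : ℕ) : Set ℚ[Perm (Fin n)] :=
  {x | (∃ i, 1 ≤ i ∧ i ≤ n ∧ (Even i → ¬ ℓ ∣ i) ∧ x = cycleSum n i) ∨
    (∃ j, 1 ≤ j ∧ 1 < 2 * ℓ * j ∧ 2 * ℓ * j < n ∧ x = classSum n {2 * ℓ * j - 1, 2})}

variable {n ℓ : ℕ}

theorem classSum_singleton_mem_adjoin_of_not_dvd {i : ℕ} (h2 : 2 ≤ i) (hn : i ≤ n)
    (hi : Even i → ¬ ℓ ∣ i) : classSum n {i} ∈ Algebra.adjoin ℚ (generatorsY n ℓ) :=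
  Algebra.subset_adjoin (Or.inl ⟨i, by omega, hn, hi, by rw [cycleSum, if_neg (by omega)]⟩)

theorem classSum_singleton_mem_adjoin (hℓ1 : 1 < ℓ) (hℓodd : Odd ℓ) {k : ℕ} (hk : 2 ≤ k)
    (hkn : k ≤ n)
    (ih : ∀ m, classKey m < classKey {k} → classSum n m ∈ Algebra.adjoin ℚ (generatorsY n ℓ)) :
    classSum n {k} ∈ Algebra.adjoin ℚ (generatorsY n ℓ) := by
  by_cases hgen : Even k → ¬ ℓ ∣ k
  · exact classSum_singleton_mem_adjoin_of_not_dvd hk hkn hgen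
  push Not at hgen
  obtain ⟨j, rfl⟩ : 2 * ℓ ∣ k :=
    (Nat.coprime_two_left.mpr hℓodd).mul_dvd_of_dvd_of_dvd hgen.1.two_dvd hgen.2
  have hj : 1 ≤ j := Nat.pos_of_ne_zero (by rintro rfl; omega)
  have hk4 : 4 ≤ 2 * ℓ * j := by nlinarith
  refine classSum_singleton_mem (by omega) ?_ ?_
    (fun hlt => Algebra.subset_adjoin (Or.inr ⟨j, hj, by omega, hlt, rfl⟩)) ih
  · refine classSum_singleton_mem_adjoin_of_not_dvd le_rfl (by omega) fun _ hdvd => ?_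
    obtain ⟨t, rfl⟩ := hℓodd
    have := Nat.le_of_dvd two_pos hdvd
    omega
  · refine classSum_singleton_mem_adjoin_of_not_dvd (by omega) (by omega) fun heven _ => ?_
    exact Nat.not_even_iff_odd.mpr (Nat.Even.sub_odd (by omega) (by simp [mul_assoc]) odd_one)
      heven

theorem classSum_mem_adjoin (hℓ1 : 1 < ℓ) (hℓodd : Odd ℓ) (m : Multiset ℕ) :
    classSum n m ∈ Algebra.adjoin ℚ (generatorsY n ℓ) := by
  induction m using (wellFounded_lt.onFun (f := classKey)).induction with | _ m ih => ?_
  by_cases hex : ∃ π : Perm (Fin n), π.cycleType = m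
  swap
  · rw [classSum_eq_zero hex]
    exact zero_mem _
  obtain ⟨π, rfl⟩ := hex
  obtain hc | hc | hc : Multiset.card π.cycleType = 0 ∨ Multiset.card π.cycleType = 1 ∨
      2 ≤ Multiset.card π.cycleType := by omega
  · rw [Multiset.card_eq_zero.mp hc, classSum_zero]
    exact one_mem _
  · obtain ⟨k, hk⟩ := Multiset.card_eq_one.mp hc
    have hkn : k ≤ n := by simpa [hk] using π.sum_cycleType_le
    rw [hk] at ih ⊢
    exact classSum_singleton_mem_adjoin hℓ1 hℓodd
      (Perm.two_le_of_mem_cycleType (hk ▸ Multiset.mem_singleton_self k)) hkn ih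
  · obtain ⟨a, b, hab, ha, hb, rfl⟩ := Perm.exists_disjoint_mul_eq_of_two_le_card_cycleType hc
    exact classSum_mul_mem_of_disjoint hab ha hb ih

end Generators

/-- For odd `ℓ > 1`, the class sums
`Y_ℓ(n) = {sᵢ : 1 ≤ i ≤ n, and if i is even then ℓ ∤ i} ∪ {s_{(2ℓj−1,2)} : 1 < 2ℓj < n}`
generate the center of `ℚ[Sₙ]` as a ℚ-algebra. -/
theorem adjoin_Y_eq_center (n ℓ : ℕ) (hℓ1 : 1 < ℓ) (hℓodd : Odd ℓ) :
    Algebra.adjoin ℚ {x : MonoidAlgebra ℚ (Equiv.Perm (Fin n)) |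
        (∃ i, 1 ≤ i ∧ i ≤ n ∧ (Even i → ¬ ℓ ∣ i) ∧ x = cycleSum n i) ∨
        (∃ j, 1 ≤ j ∧ 1 < 2 * ℓ * j ∧ 2 * ℓ * j < n ∧
          x = classSum n {2 * ℓ * j - 1, 2})} =
      Subalgebra.center ℚ (MonoidAlgebra ℚ (Equiv.Perm (Fin n))) := by
  refine le_antisymm (Algebra.adjoin_le ?_) fun x hx => ?_
  · rintro x (⟨i, -, -, -, rfl⟩ | ⟨j, -, -, -, rfl⟩)
    · unfold cycleSum
      split_ifs
      exacts [one_mem _, classSum_mem_center _]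
    · exact classSum_mem_center _
  · rw [eq_sum_classSum_of_mem_center hx]
    exact sum_mem fun m _ => Subalgebra.smul_mem _ (classSum_mem_adjoin hℓ1 hℓodd m) _
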